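/- arXiv:2401.06309 — 3 statements merged into one kernel-verified Lean document; each statement's English description precedes it below -/
import Mathlib

section
/- Let k1, k2, τ > 0 and suppose 2τ²k1 + 2τk2 - 1 > 0. Then δ* := τk1 + k2 - √(k2²+2k1) satisfies δ* < τk1, and for every δ with δ* ≤ δ < τk1, the function λ̃2(δ) = -k1²/(-τk1+δ)³ - k1k2/(-τk1+δ)² + k1/(2(-τk1+δ)) satisfies λ̃2(δ) ≥ 0. -/
/-!
Writing `x = δ - τ k₁ < 0`, the indicator factors as `λ̃₂ = k₁ (x² - 2k₂x - 2k₁) / (2x³)`.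
Since `x³ < 0`, it is nonnegative exactly when the quadratic is nonpositive, i.e. when `x` lies
between its roots `k₂ ± √(k₂² + 2k₁)`; the lower bound `δ ≥ δ*` is the lower root, and the upper
root is positive.
-/

namespace Real

lemma lt_sqrt_sq_add {b c : ℝ} (hc : 0 < c) : b < √(b ^ 2 + c) :=
  calc b ≤ |b| := le_abs_self b
    _ = √(b ^ 2) := (sqrt_sq_eq_abs b).symm
    _ < √(b ^ 2 + c) := sqrt_lt_sqrt (sq_nonneg b) (by linarith)

lemma neg_lt_sqrt_sq_add {b c : ℝ} (hc : 0 < c) : -b < √(b ^ 2 + c) := by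
  simpa only [neg_sq] using lt_sqrt_sq_add (b := -b) hc

lemma quadratic_nonpos_of_mem_Icc_roots {b c x : ℝ} (hbc : 0 ≤ b ^ 2 + c)
    (hlo : b - √(b ^ 2 + c) ≤ x) (hhi : x ≤ b + √(b ^ 2 + c)) :
    x ^ 2 - 2 * b * x - c ≤ 0 := by
  have hroots : x ^ 2 - 2 * b * x - c = (x - (b - √(b ^ 2 + c))) * (x - (b + √(b ^ 2 + c))) := by
    linear_combination sq_sqrt hbc
  rw [hroots]
  exact mul_nonpos_of_nonneg_of_nonpos (by linarith) (by linarith)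

end Real

lemma ovrv_indicator_eq (k1 k2 : ℝ) {x : ℝ} (hx : x ≠ 0) :
    -k1 ^ 2 / x ^ 3 - k1 * k2 / x ^ 2 + k1 / (2 * x)
      = k1 * (x ^ 2 - 2 * k2 * x - 2 * k1) / (2 * x ^ 3) := by
  field_simp
  ring

lemma ovrv_indicator_nonneg {k1 k2 x : ℝ} (hk1 : 0 < k1) (hx : x < 0)
    (hlo : k2 - √(k2 ^ 2 + 2 * k1) ≤ x) :
    0 ≤ -k1 ^ 2 / x ^ 3 - k1 * k2 / x ^ 2 + k1 / (2 * x) := by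
  have hhi : x ≤ k2 + √(k2 ^ 2 + 2 * k1) := by
    linarith [Real.neg_lt_sqrt_sq_add (b := k2) (by positivity : 0 < 2 * k1)]
  have hquad := Real.quadratic_nonpos_of_mem_Icc_roots (by positivity) hlo hhi
  rw [ovrv_indicator_eq k1 k2 hx.ne]
  exact div_nonneg_of_nonpos (mul_nonpos_of_nonneg_of_nonpos hk1.le hquad)
    (by nlinarith [Odd.pow_neg (by decide : Odd 3) hx])

theorem stmt_4_general (k1 k2 τ : ℝ) (hk1 : 0 < k1) :
    (τ*k1 + k2 - Real.sqrt (k2^2 + 2*k1) < τ*k1) ∧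
    ∀ δ : ℝ, τ*k1 + k2 - Real.sqrt (k2^2 + 2*k1) ≤ δ → δ < τ*k1 →
      -k1^2 / (-τ*k1 + δ)^3 - k1*k2 / (-τ*k1 + δ)^2 + k1 / (2*(-τ*k1 + δ)) ≥ 0 := by
  have hk2s := Real.lt_sqrt_sq_add (b := k2) (by positivity : 0 < 2 * k1)
  refine ⟨by linarith, fun δ hlo hhi => ?_⟩
  exact ovrv_indicator_nonneg hk1 (by linarith) (by linarith)

theorem stmt_4 (k1 k2 τ : ℝ) (hk1 : 0 < k1) (hk2 : 0 < k2) (hτ : 0 < τ)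
    (hcond : 2*τ^2*k1 + 2*τ*k2 - 1 > 0) :
    (τ*k1 + k2 - Real.sqrt (k2^2 + 2*k1) < τ*k1) ∧
    ∀ δ : ℝ, τ*k1 + k2 - Real.sqrt (k2^2 + 2*k1) ≤ δ → δ < τ*k1 →
      -k1^2 / (-τ*k1 + δ)^3 - k1*k2 / (-τ*k1 + δ)^2 + k1 / (2*(-τ*k1 + δ)) ≥ 0 :=
  stmt_4_general k1 k2 τ hk1
end

section
/- Let k1, k2, τ > 0 and δ1, δ2 with 1+δ1 > 0, 1+δ2 > 0. Then λ̂2(δ1, δ2) > λ2(0,0) if and only if θ(δ1, δ2) = 2δ1² - (τ²k1 + 2τk2 - 4)δ1 - 2τk2δ2 - 2τk2δ1δ2 > 0, where λ̂2(δ1,δ2) = -(k1(1+δ1)/(τk1)³)((τk1)²/2 + τk1k2(1+δ2) - k1(1+δ1)) and λ2(0,0) = -(k1/(τk1)³)((τk1)²/2 + τk1k2 - k1). -/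
/-!
The difference of the two indicators factors as `θ(δ₁, δ₂) / (2 τ³ k₁)`, and the denominator is
positive, so the difference has the sign of `θ`.
-/

namespace OVRV

/-- The indicator `λ̂₂(δ₁, δ₂)`; the unattacked `λ₂(0, 0)` is its value at `δ₁ = δ₂ = 0`. -/
noncomputable def stringStabilityIndicator (k1 k2 τ δ1 δ2 : ℝ) : ℝ :=
  -(k1*(1+δ1)/(τ*k1)^3) * ((τ*k1)^2/2 + τ*k1*k2*(1+δ2) - k1*(1+δ1))

def theta (k1 k2 τ δ1 δ2 : ℝ) : ℝ :=
  2*δ1^2 - (τ^2*k1 + 2*τ*k2 - 4)*δ1 - 2*τ*k2*δ2 - 2*τ*k2*δ1*δ2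

theorem stringStabilityIndicator_zero (k1 k2 τ : ℝ) :
    stringStabilityIndicator k1 k2 τ 0 0 = -(k1/(τ*k1)^3) * ((τ*k1)^2/2 + τ*k1*k2 - k1) := by
  simp [stringStabilityIndicator]

theorem stringStabilityIndicator_sub_zero {k1 τ : ℝ} (hk1 : k1 ≠ 0) (hτ : τ ≠ 0) (k2 δ1 δ2 : ℝ) :
    stringStabilityIndicator k1 k2 τ δ1 δ2 - stringStabilityIndicator k1 k2 τ 0 0 =
      theta k1 k2 τ δ1 δ2 / (2 * τ^3 * k1) := by
  simp only [stringStabilityIndicator, theta]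
  field_simp
  ring

theorem stringStabilityIndicator_lt_iff {k1 τ : ℝ} (hk1 : 0 < k1) (hτ : 0 < τ) (k2 δ1 δ2 : ℝ) :
    stringStabilityIndicator k1 k2 τ 0 0 < stringStabilityIndicator k1 k2 τ δ1 δ2 ↔
      0 < theta k1 k2 τ δ1 δ2 := by
  rw [← sub_pos, stringStabilityIndicator_sub_zero hk1.ne' hτ.ne']
  exact div_pos_iff_of_pos_right (by positivity)

end OVRV

theorem stmt_8_general (k1 k2 τ δ1 δ2 : ℝ) (hk1 : 0 < k1) (hτ : 0 < τ) :
    (-(k1*(1+δ1)/(τ*k1)^3) * ((τ*k1)^2/2 + τ*k1*k2*(1+δ2) - k1*(1+δ1)) >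
     -(k1/(τ*k1)^3) * ((τ*k1)^2/2 + τ*k1*k2 - k1))
    ↔ (2*δ1^2 - (τ^2*k1 + 2*τ*k2 - 4)*δ1 - 2*τ*k2*δ2 - 2*τ*k2*δ1*δ2 > 0) := by
  rw [← OVRV.stringStabilityIndicator_zero]
  exact OVRV.stringStabilityIndicator_lt_iff hk1 hτ k2 δ1 δ2

theorem stmt_8 (k1 k2 τ δ1 δ2 : ℝ) (hk1 : 0 < k1) (hk2 : 0 < k2) (hτ : 0 < τ)
    (h1 : 1 + δ1 > 0) (h2 : 1 + δ2 > 0) :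
    (-(k1*(1+δ1)/(τ*k1)^3) * ((τ*k1)^2/2 + τ*k1*k2*(1+δ2) - k1*(1+δ1)) >
     -(k1/(τ*k1)^3) * ((τ*k1)^2/2 + τ*k1*k2 - k1))
    ↔ (2*δ1^2 - (τ^2*k1 + 2*τ*k2 - 4)*δ1 - 2*τ*k2*δ2 - 2*τ*k2*δ1*δ2 > 0) :=
  stmt_8_general k1 k2 τ δ1 δ2 hk1 hτ
end

section
/- Let k1, k2, τ > 0 and suppose the unattacked OVRV model is string stable, i.e., λ2 < 0, equivalently τ²k1/2 + τk2 - 1 > 0. Then every Type I attack δ with δ* ≤ δ < τk1, where δ* = τk1 + k2 - √(k2²+2k1), satisfies λ̃2(δ) ≥ 0 > λ2; in particular, any attack destabilizing the dynamics also degrades stability (λ̃2 > λ2). -/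
/-!
Writing `x = -τ k1 + δ`, the indicator equals `k1 q(x) / (2 x³)` with `q(x) = x² - 2 k2 x - 2 k1`,
so for `x < 0` its sign is opposite to that of `q`. The roots of `q` are `k2 ± √(k2² + 2 k1)`:
an attack with `δ* ≤ δ < τ k1` puts `x` between them, so `q(x) ≤ 0`, while
`q(-τ k1) = 2 k1 (τ² k1 / 2 + τ k2 - 1) > 0` is exactly the stability hypothesis.
-/

/-- `λ2 = stringStabilityIndicator k1 k2 (-τ * k1)` and `λ̃2(δ) = stringStabilityIndicator k1 k2 (-τ * k1 + δ)`. -/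
noncomputable def stringStabilityIndicator (k1 k2 x : ℝ) : ℝ :=
  -k1^2 / x^3 - k1*k2 / x^2 + k1 / (2*x)

section

variable {k1 k2 x : ℝ}

lemma stringStabilityIndicator_eq (hx : x ≠ 0) :
    stringStabilityIndicator k1 k2 x = k1 * (x^2 - 2*k2*x - 2*k1) / (2*x^3) := by
  unfold stringStabilityIndicator
  field_simp
  ring

lemma stringStabilityIndicator_nonneg (hk1 : 0 ≤ k1) (hx : x < 0)
    (hq : x^2 - 2*k2*x - 2*k1 ≤ 0) : 0 ≤ stringStabilityIndicator k1 k2 x := by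
  rw [stringStabilityIndicator_eq hx.ne]
  exact div_nonneg_of_nonpos (mul_nonpos_of_nonneg_of_nonpos hk1 hq)
    (by nlinarith [pow_pos (neg_pos.mpr hx) 3])

lemma stringStabilityIndicator_neg (hk1 : 0 < k1) (hx : x < 0)
    (hq : 0 < x^2 - 2*k2*x - 2*k1) : stringStabilityIndicator k1 k2 x < 0 := by
  rw [stringStabilityIndicator_eq hx.ne]
  exact div_neg_of_pos_of_neg (mul_pos hk1 hq) (by nlinarith [pow_pos (neg_pos.mpr hx) 3])

lemma quadratic_nonpos_of_mem_Icc (hk1 : 0 ≤ k1)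
    (h : x ∈ Set.Icc (k2 - √(k2^2 + 2*k1)) (k2 + √(k2^2 + 2*k1))) :
    x^2 - 2*k2*x - 2*k1 ≤ 0 := by
  have hs : √(k2^2 + 2*k1) ^ 2 = k2^2 + 2*k1 := Real.sq_sqrt (by positivity)
  have hfactor : x^2 - 2*k2*x - 2*k1
      = (x - (k2 - √(k2^2 + 2*k1))) * (x - (k2 + √(k2^2 + 2*k1))) := by
    linear_combination hs
  rw [hfactor]
  exact mul_nonpos_of_nonneg_of_nonpos (sub_nonneg.mpr h.1) (sub_nonpos.mpr h.2)

lemma neg_le_sqrt_sq_add (hk1 : 0 ≤ k1) : -k2 ≤ √(k2^2 + 2*k1) :=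
  (neg_le_abs k2).trans (Real.abs_le_sqrt (by linarith))

end

theorem stmt_13_general (k1 k2 τ : ℝ) (hk1 : 0 < k1) (hτ : 0 < τ)
    (hstable : τ^2*k1/2 + τ*k2 - 1 > 0) :
    ∀ δ : ℝ, τ*k1 + k2 - Real.sqrt (k2^2 + 2*k1) ≤ δ → δ < τ*k1 →
      (-k1^2 / (-τ*k1 + δ)^3 - k1*k2 / (-τ*k1 + δ)^2 + k1 / (2*(-τ*k1 + δ)) ≥ 0) ∧
      (0 > -k1^2 / (-τ*k1)^3 - k1*k2 / (-τ*k1)^2 + k1 / (2*(-τ*k1))) ∧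
      (-k1^2 / (-τ*k1 + δ)^3 - k1*k2 / (-τ*k1 + δ)^2 + k1 / (2*(-τ*k1 + δ)) >
       -k1^2 / (-τ*k1)^3 - k1*k2 / (-τ*k1)^2 + k1 / (2*(-τ*k1))) := by
  intro δ hδ_ge hδ_lt
  have hx : -τ*k1 + δ < 0 := by linarith
  have hattacked : 0 ≤ stringStabilityIndicator k1 k2 (-τ*k1 + δ) :=
    stringStabilityIndicator_nonneg hk1.le hx <| quadratic_nonpos_of_mem_Icc hk1.le
      ⟨by linarith, by linarith [neg_le_sqrt_sq_add (k2 := k2) hk1.le]⟩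
  have hunattacked : stringStabilityIndicator k1 k2 (-τ*k1) < 0 :=
    stringStabilityIndicator_neg hk1 (by nlinarith) (by nlinarith [mul_pos hk1 hstable])
  exact ⟨hattacked, hunattacked, hunattacked.trans_le hattacked⟩

theorem stmt_13 (k1 k2 τ : ℝ) (hk1 : 0 < k1) (hk2 : 0 < k2) (hτ : 0 < τ)
    (hstable : τ^2*k1/2 + τ*k2 - 1 > 0) :
    ∀ δ : ℝ, τ*k1 + k2 - Real.sqrt (k2^2 + 2*k1) ≤ δ → δ < τ*k1 →
      (-k1^2 / (-τ*k1 + δ)^3 - k1*k2 / (-τ*k1 + δ)^2 + k1 / (2*(-τ*k1 + δ)) ≥ 0) ∧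
      (0 > -k1^2 / (-τ*k1)^3 - k1*k2 / (-τ*k1)^2 + k1 / (2*(-τ*k1))) ∧
      (-k1^2 / (-τ*k1 + δ)^3 - k1*k2 / (-τ*k1 + δ)^2 + k1 / (2*(-τ*k1 + δ)) >
       -k1^2 / (-τ*k1)^3 - k1*k2 / (-τ*k1)^2 + k1 / (2*(-τ*k1))) :=
  stmt_13_general k1 k2 τ hk1 hτ hstable
end
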